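/- arXiv:2106.03375 — 2 statements merged into one kernel-verified Lean document; each statement's English description precedes it below -/
import Mathlib

section
/- If A and B are square matrices with AB = BA = 0, then the mixed second partial derivative of the map g(t,s) = exp(tA + sB) with respect to t and s is the zero matrix for all (t,s). -/
/-!
Since `A * B = B * A = 0`, every mixed monomial in `t • A` and `s • B` vanishes, so the exponential
series splits: `exp (t • A + s • B) = exp (t • A) + exp (s • B) - 1`. A sum of a function of `t`
and a function of `s` has vanishing mixed partial derivative.
-/

open NormedSpace

attribute [local instance] Matrix.linftyOpNormedRing Matrix.linftyOpNormedAlgebra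

section Ring

variable {R : Type*} [Ring R] {a b : R}

theorem pow_succ_mul_eq_zero_of_mul_eq_zero (hab : a * b = 0) (n : ℕ) : a ^ (n + 1) * b = 0 := by
  rw [pow_succ, mul_assoc, hab, mul_zero]

theorem add_pow_succ_of_mul_eq_zero (hab : a * b = 0) (hba : b * a = 0) (n : ℕ) :
    (a + b) ^ (n + 1) = a ^ (n + 1) + b ^ (n + 1) := by
  induction n with
  | zero => simp
  | succ n ih =>
    rw [pow_succ, ih, add_mul, mul_add, mul_add, pow_succ_mul_eq_zero_of_mul_eq_zero hab,
      pow_succ_mul_eq_zero_of_mul_eq_zero hba, add_zero, zero_add, ← pow_succ, ← pow_succ]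

end Ring

theorem NormedSpace.exp_add_of_mul_eq_zero {𝔸 : Type*} [NormedRing 𝔸] [NormedAlgebra ℚ 𝔸]
    [CompleteSpace 𝔸] {a b : 𝔸} (hab : a * b = 0) (hba : b * a = 0) :
    exp (a + b) = exp a + exp b - 1 := by
  have hsum := ((exp_series_hasSum_exp' (𝕂 := ℚ) a).add (exp_series_hasSum_exp' (𝕂 := ℚ) b)).sub
    (hasSum_ite_eq 0 (1 : 𝔸))
  refine (exp_series_hasSum_exp' (𝕂 := ℚ) (a + b)).unique (hsum.congr_fun fun n => ?_)
  cases n with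
  | zero => simp
  | succ n => simp [add_pow_succ_of_mul_eq_zero hab hba]

theorem mixed_second_deriv_exp_zero {n : ℕ} (A B : Matrix (Fin n) (Fin n) ℝ)
    (hAB : A * B = 0) (hBA : B * A = 0) (t s : ℝ) :
    deriv (fun s' : ℝ => deriv (fun t' : ℝ => exp (t' • A + s' • B)) t) s = 0 := by
  have hsplit (t' s' : ℝ) : exp (t' • A + s' • B) = exp (t' • A) + (exp (s' • B) - 1) :=
    (exp_add_of_mul_eq_zero (by simp [hAB]) (by simp [hBA])).trans (add_sub_assoc _ _ _)
  have hinner (s' : ℝ) :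
      deriv (fun t' => exp (t' • A + s' • B)) t = deriv (fun t' => exp (t' • A)) t := by
    simp only [hsplit]
    exact deriv_add_const _
  simp only [hinner]
  exact deriv_const s _
end

section
/- If A₁, ..., Aₘ are square matrices with AᵢAⱼ = 0 for all i ≠ j, then exp(∑ᵢ tᵢAᵢ) = I + ∑ᵢ (exp(tᵢAᵢ) − I) for all real t₁,...,tₘ. -/
/-! If `a * b = 0`, every positive power of `a` kills `b`, so `exp a * b = b`; symmetrically
`x * exp b = x` whenever `x * b = 0`, and together `(exp a - 1) * (exp b - 1) = 0`. Summands that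
annihilate each other commute, so the exponential of their sum is the product of the
`1 + (exp (f i) - 1)`, and expanding that product only the linear terms survive. -/

open NormedSpace

namespace NormedSpace

variable {𝔸 : Type*} [NormedRing 𝔸] [NormedAlgebra ℚ 𝔸] [CompleteSpace 𝔸]

theorem exp_mul_eq_self_of_mul_eq_zero {a x : 𝔸} (h : a * x = 0) : exp a * x = x := by
  have higher_terms : ∀ n ≠ 0, ((n.factorial⁻¹ : ℚ) • a ^ n) * x = 0 := by
    rintro (_ | n) hn
    · contradiction
    · rw [smul_mul_assoc, pow_succ, mul_assoc, h, mul_zero, smul_zero]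
  refine ((exp_series_hasSum_exp' (𝕂 := ℚ) a).mul_right x).unique ?_
  simpa using hasSum_single 0 higher_terms

theorem mul_exp_eq_self_of_mul_eq_zero {a x : 𝔸} (h : x * a = 0) : x * exp a = x := by
  apply MulOpposite.op_injective
  rw [MulOpposite.op_mul, ← exp_op]
  exact exp_mul_eq_self_of_mul_eq_zero (by rw [← MulOpposite.op_mul, h, MulOpposite.op_zero])

theorem exp_sub_one_mul_exp_sub_one_of_mul_eq_zero {a b : 𝔸} (h : a * b = 0) :
    (exp a - 1) * (exp b - 1) = 0 := by
  have hb : (exp a - 1) * b = 0 := by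
    rw [sub_mul, one_mul, exp_mul_eq_self_of_mul_eq_zero h, sub_self]
  rw [mul_sub, mul_one, mul_exp_eq_self_of_mul_eq_zero hb, sub_self]

theorem exp_sum_of_pairwise_mul_eq_zero {ι : Type*} (s : Finset ι) (f : ι → 𝔸)
    (h : (s : Set ι).Pairwise fun i j => f i * f j = 0) :
    exp (∑ i ∈ s, f i) = 1 + ∑ i ∈ s, (exp (f i) - 1) := by
  classical
  induction s using Finset.induction_on with
  | empty => simp
  | insert a s ha ih =>
    rw [Finset.coe_insert, Set.pairwise_insert] at h
    obtain ⟨hs, hfa⟩ := h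
    have hne : ∀ i ∈ s, a ≠ i := fun i hi hai => ha (hai ▸ hi)
    have left : f a * ∑ i ∈ s, f i = 0 := by
      rw [Finset.mul_sum]; exact Finset.sum_eq_zero fun i hi => (hfa i hi (hne i hi)).1
    have right : (∑ i ∈ s, f i) * f a = 0 := by
      rw [Finset.sum_mul]; exact Finset.sum_eq_zero fun i hi => (hfa i hi (hne i hi)).2
    have cross : (exp (f a) - 1) * ∑ i ∈ s, (exp (f i) - 1) = 0 := by
      rw [Finset.mul_sum]
      exact Finset.sum_eq_zero fun i hi =>
        exp_sub_one_mul_exp_sub_one_of_mul_eq_zero (hfa i hi (hne i hi)).1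
    rw [Finset.sum_insert ha, Finset.sum_insert ha,
      exp_add_of_commute (left.trans right.symm), ih hs]
    calc exp (f a) * (1 + ∑ i ∈ s, (exp (f i) - 1))
        = (1 + (exp (f a) - 1)) * (1 + ∑ i ∈ s, (exp (f i) - 1)) := by rw [add_sub_cancel]
      _ = 1 + (exp (f a) - 1 + ∑ i ∈ s, (exp (f i) - 1)) := by
        rw [add_mul, one_mul, mul_add, mul_one, cross]; abel

end NormedSpace

theorem exp_sum_of_mul_eq_zero {n m : ℕ} (A : Fin m → Matrix (Fin n) (Fin n) ℝ)
    (h : ∀ i j, i ≠ j → A i * A j = 0) (t : Fin m → ℝ) :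
    exp (∑ i, t i • A i) = 1 + ∑ i, (exp (t i • A i) - 1) := by
  open scoped Matrix.Norms.Operator in
  exact exp_sum_of_pairwise_mul_eq_zero _ _ fun i _ j _ hij => by
    dsimp only; rw [smul_mul_smul_comm, h i j hij, smul_zero]
end
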